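/- Let g, b ∈ ℝⁿ, c ∈ ℝ, δ > 0, and let H be a symmetric positive-definite n×n real matrix, and suppose a strictly feasible point exists for the problem min { gᵀx : bᵀx + c ≤ 0, xᵀHx ≤ δ }. If λ* > 0 and ν* ≥ 0 maximize the dual function D(λ, ν) = -(1/(2λ))(q + 2νr + ν²s) + νc - λδ/2 over λ ≥ 0, ν ≥ 0 (with q = gᵀH⁻¹g, r = gᵀH⁻¹b, s = bᵀH⁻¹b), then the point x* = -(1/λ*) H⁻¹(g + ν* b) is feasible and attains the primal optimal value, i.e., gᵀx* = min { gᵀx : bᵀx + c ≤ 0, xᵀHx ≤ δ }. -/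

import Mathlib

open BigOperators Matrix

noncomputable section

/-- The dual function of the LQCLP:
`D(λ, ν) = -(1/(2λ))(q + 2νr + ν²s) + νc - λδ/2` with
`q = gᵀH⁻¹g`, `r = gᵀH⁻¹b`, `s = bᵀH⁻¹b`. -/
def dualFn {n : ℕ} (g b : Fin n → ℝ) (c δ : ℝ) (H : Matrix (Fin n) (Fin n) ℝ)
    (lam nu : ℝ) : ℝ :=
  -(1 / (2 * lam)) * ((g ⬝ᵥ (H⁻¹ *ᵥ g)) + 2 * nu * (g ⬝ᵥ (H⁻¹ *ᵥ b))
      + nu ^ 2 * (b ⬝ᵥ (H⁻¹ *ᵥ b)))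
    + nu * c - lam * δ / 2

/-!
At a dual maximizer with `λ* > 0` the first-order conditions of the dual problem are exactly the
KKT conditions of the primal one. Maximality in `λ` of `-K/(2λ) - λδ/2`, with
`K = (g + ν* b)ᵀH⁻¹(g + ν* b) = λ*² x*ᵀHx*`, forces `K = λ*²δ`: the trust-region constraint is
active at `x*`. Maximality over `ν ≥ 0` of a concave quadratic gives `bᵀx* + c ≤ 0` (the sign of
its derivative) and complementary slackness. Since `g + ν* b = -λ* H x*`, these conditions make
`x*` a minimizer of the convex Lagrangian, hence optimal for the primal problem.
-/

lemma sq_mul_eq_of_isMaxOn_Ioi {K δ lam : ℝ} (hK : 0 ≤ K) (hδ : 0 < δ) (hlam : 0 < lam)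
    (hmax : IsMaxOn (fun l => -(K / (2 * l)) - l * δ / 2) (Set.Ioi 0) lam) :
    K = lam ^ 2 * δ := by
  -- at the midpoint of `lam` and `K / (lam δ)` the gap in the objective is minus a square
  set l := (lam + K / (lam * δ)) / 2
  have hl : 0 < l := by positivity
  have hgap : (-(K / (2 * lam)) - lam * δ / 2) - (-(K / (2 * l)) - l * δ / 2)
      = -((K - lam ^ 2 * δ) ^ 2 / (8 * lam ^ 2 * δ * l)) := by
    simp only [l]; field_simp; ring
  have hsq : (K - lam ^ 2 * δ) ^ 2 / (8 * lam ^ 2 * δ * l) ≤ 0 := by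
    linarith [isMaxOn_iff.mp hmax l hl]
  have hnum : (K - lam ^ 2 * δ) ^ 2 ≤ 0 := by
    simpa using (div_le_iff₀ (by positivity : (0 : ℝ) < 8 * lam ^ 2 * δ * l)).mp hsq
  linarith [pow_eq_zero_iff two_ne_zero |>.mp (le_antisymm hnum (sq_nonneg _))]

lemma nonpos_of_forall_mul_le_mul_sq {β s T : ℝ} (hs : 0 ≤ s) (hT : 0 < T)
    (h : ∀ t, 0 < t → t ≤ T → t * β ≤ s * t ^ 2) : β ≤ 0 := by
  by_contra! hβ
  set t := min T (β / (s + 1))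
  have ht : 0 < t := lt_min hT (by positivity)
  have hβt : β ≤ s * t := by nlinarith [h t ht (min_le_left _ _)]
  have hst : s * t ≤ s * (β / (s + 1)) := mul_le_mul_of_nonneg_left (min_le_right _ _) hs
  have : s * (β / (s + 1)) < β := by
    rw [mul_div_assoc', div_lt_iff₀ (by positivity)]; linarith
  linarith

lemma complementarity_of_isMaxOn_Ici {a s nu : ℝ} (hs : 0 ≤ s) (hnu : 0 ≤ nu)
    (hmax : IsMaxOn (fun v => a * v - s * v ^ 2 / 2) (Set.Ici 0) nu) :
    a - s * nu ≤ 0 ∧ nu * (a - s * nu) = 0 := by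
  have step : ∀ t, 0 ≤ nu + t → t * (a - s * nu) ≤ s / 2 * t ^ 2 := fun t ht => by
    nlinarith [isMaxOn_iff.mp hmax (nu + t) ht]
  have hle : a - s * nu ≤ 0 :=
    nonpos_of_forall_mul_le_mul_sq (by positivity) one_pos fun t ht _ => step t (by linarith)
  refine ⟨hle, ?_⟩
  rcases hnu.eq_or_lt with rfl | hnu
  · simp
  have hge : -(a - s * nu) ≤ 0 :=
    nonpos_of_forall_mul_le_mul_sq (by positivity) hnu fun t _ htnu => by
      nlinarith [step (-t) (by linarith)]
  simp [show a - s * nu = 0 by linarith]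

section QuadraticForm

variable {n : Type*} [Fintype n]

lemma Matrix.IsSymm.dotProduct_mulVec_comm {A : Matrix n n ℝ} (hA : A.IsSymm) (u v : n → ℝ) :
    u ⬝ᵥ (A *ᵥ v) = v ⬝ᵥ (A *ᵥ u) := by
  rw [dotProduct_mulVec, ← mulVec_transpose, hA.eq, dotProduct_comm]

lemma dotProduct_le_of_kkt {H : Matrix n n ℝ} (hH : H.PosSemidef) {g b x₀ x : n → ℝ}
    {c δ lam nu : ℝ} (hlam : 0 ≤ lam) (hnu : 0 ≤ nu) (hstat : g + nu • b = -lam • (H *ᵥ x₀))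
    (hslackH : lam * (x₀ ⬝ᵥ (H *ᵥ x₀) - δ) = 0) (hslackb : nu * (b ⬝ᵥ x₀ + c) = 0)
    (hb : b ⬝ᵥ x + c ≤ 0) (hx : x ⬝ᵥ (H *ᵥ x) ≤ δ) : g ⬝ᵥ x₀ ≤ g ⬝ᵥ x := by
  have hsymm := (isHermitian_iff_isSymm.mp hH.isHermitian).dotProduct_mulVec_comm
  have hg : ∀ y, g ⬝ᵥ y = -lam * (y ⬝ᵥ (H *ᵥ x₀)) - nu * (b ⬝ᵥ y) := fun y => by
    have := congrArg (y ⬝ᵥ ·) hstat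
    simp only [dotProduct_add, dotProduct_smul, smul_eq_mul] at this
    rw [dotProduct_comm g, dotProduct_comm b]
    linarith
  have hpsd : 0 ≤ (x - x₀) ⬝ᵥ (H *ᵥ (x - x₀)) := by
    simpa using hH.dotProduct_mulVec_nonneg (x - x₀)
  rw [mulVec_sub, dotProduct_sub, sub_dotProduct, sub_dotProduct, hsymm x₀ x] at hpsd
  rw [hg, hg]
  linarith [mul_nonneg hlam hpsd, mul_nonneg hlam (sub_nonneg.mpr hx),
    mul_nonpos_of_nonneg_of_nonpos hnu hb]

end QuadraticForm

section DualFunction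

variable {n : ℕ} {g b : Fin n → ℝ} {c δ : ℝ} {H : Matrix (Fin n) (Fin n) ℝ}

lemma dualFn_eq_of_isSymm (hA : H⁻¹.IsSymm) (l v : ℝ) :
    dualFn g b c δ H l v
      = -((g + v • b) ⬝ᵥ (H⁻¹ *ᵥ (g + v • b)) / (2 * l)) - l * δ / 2 + v * c := by
  simp only [dualFn, mulVec_add, mulVec_smul, dotProduct_add, add_dotProduct, dotProduct_smul,
    smul_dotProduct, smul_eq_mul, hA.dotProduct_mulVec_comm b g]
  ring

lemma dualFn_eq_quadratic (lam v : ℝ) :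
    dualFn g b c δ H lam v
      = (c - g ⬝ᵥ (H⁻¹ *ᵥ b) / lam) * v - b ⬝ᵥ (H⁻¹ *ᵥ b) / lam * v ^ 2 / 2
        - (g ⬝ᵥ (H⁻¹ *ᵥ g) / (2 * lam) + lam * δ / 2) := by
  simp only [dualFn]
  ring

lemma dualFn_inv_quadForm_eq_of_isMaxOn (hA : H⁻¹.PosSemidef) (hδ : 0 < δ) {lam nu : ℝ}
    (hlam : 0 < lam) (hmax : IsMaxOn (dualFn g b c δ H · nu) (Set.Ioi 0) lam) :
    (g + nu • b) ⬝ᵥ (H⁻¹ *ᵥ (g + nu • b)) = lam ^ 2 * δ := by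
  have hAsymm : H⁻¹.IsSymm := isHermitian_iff_isSymm.mp hA.isHermitian
  refine sq_mul_eq_of_isMaxOn_Ioi
    (by simpa using hA.dotProduct_mulVec_nonneg (g + nu • b)) hδ hlam
    (isMaxOn_iff.mpr fun l hl => ?_)
  have := isMaxOn_iff.mp hmax l hl
  simp only [dualFn_eq_of_isSymm hAsymm] at this
  linarith

lemma dualFn_complementarity_of_isMaxOn (hA : H⁻¹.PosSemidef) {lam nu : ℝ} (hlam : 0 < lam)
    (hnu : 0 ≤ nu) (hmax : IsMaxOn (dualFn g b c δ H lam) (Set.Ici 0) nu) :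
    let β := c - g ⬝ᵥ (H⁻¹ *ᵥ b) / lam - b ⬝ᵥ (H⁻¹ *ᵥ b) / lam * nu
    β ≤ 0 ∧ nu * β = 0 := by
  refine complementarity_of_isMaxOn_Ici
    (div_nonneg (by simpa using hA.dotProduct_mulVec_nonneg b) hlam.le) hnu
    (isMaxOn_iff.mpr fun v hv => ?_)
  have := isMaxOn_iff.mp hmax v hv
  simp only [dualFn_eq_quadratic] at this
  linarith

end DualFunction

theorem lqclp_primal_recovery_general
    (n : ℕ) (g b : Fin n → ℝ) (c δ : ℝ) (hδ : 0 < δ)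
    (H : Matrix (Fin n) (Fin n) ℝ) (hH : H.PosDef)
    (lam nu : ℝ) (hlam : 0 < lam) (hnu : 0 ≤ nu)
    (hmax : ∀ l v : ℝ, 0 < l → 0 ≤ v →
      dualFn g b c δ H l v ≤ dualFn g b c δ H lam nu) :
    b ⬝ᵥ ((-(1 / lam)) • (H⁻¹ *ᵥ (g + nu • b))) + c ≤ 0
    ∧ ((-(1 / lam)) • (H⁻¹ *ᵥ (g + nu • b)))
        ⬝ᵥ (H *ᵥ ((-(1 / lam)) • (H⁻¹ *ᵥ (g + nu • b)))) ≤ δ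
    ∧ g ⬝ᵥ ((-(1 / lam)) • (H⁻¹ *ᵥ (g + nu • b)))
        = sInf {p : ℝ | ∃ x : Fin n → ℝ,
            b ⬝ᵥ x + c ≤ 0 ∧ x ⬝ᵥ (H *ᵥ x) ≤ δ ∧ p = g ⬝ᵥ x} := by
  have hA : H⁻¹.PosSemidef := hH.inv.posSemidef
  have hK := dualFn_inv_quadForm_eq_of_isMaxOn hA hδ hlam
    (isMaxOn_iff.mpr fun l hl => hmax l nu hl hnu)
  obtain ⟨hβ, hslack⟩ := dualFn_complementarity_of_isMaxOn hA hlam hnu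
    (isMaxOn_iff.mpr fun v hv => hmax lam v hlam hv)
  set w := g + nu • b
  set x₀ := (-(1 / lam)) • (H⁻¹ *ᵥ w)
  have hHx₀ : H *ᵥ x₀ = (-(1 / lam)) • w := by
    rw [mulVec_smul, mulVec_mulVec, mul_nonsing_inv _ hH.det_pos.ne'.isUnit, one_mulVec]
  have hstat : w = -lam • (H *ᵥ x₀) := by
    rw [hHx₀, smul_smul, neg_mul_neg, mul_one_div_cancel hlam.ne', one_smul]
  have hactive : x₀ ⬝ᵥ (H *ᵥ x₀) = δ := by
    rw [hHx₀, dotProduct_smul, smul_dotProduct, dotProduct_comm, hK, smul_eq_mul, smul_eq_mul]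
    field_simp
  have hbx₀ : b ⬝ᵥ x₀ + c = c - g ⬝ᵥ (H⁻¹ *ᵥ b) / lam - b ⬝ᵥ (H⁻¹ *ᵥ b) / lam * nu := by
    simp only [x₀, w, dotProduct_smul, mulVec_add, mulVec_smul, dotProduct_add, smul_eq_mul,
      (isHermitian_iff_isSymm.mp hA.isHermitian).dotProduct_mulVec_comm b g]
    ring
  have hfeas_b : b ⬝ᵥ x₀ + c ≤ 0 := hbx₀ ▸ hβ
  refine ⟨hfeas_b, hactive.le, Eq.symm (IsLeast.csInf_eq ⟨⟨x₀, hfeas_b, hactive.le, rfl⟩, ?_⟩)⟩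
  rintro p ⟨x, hb, hx, rfl⟩
  exact dotProduct_le_of_kkt hH.posSemidef hlam.le hnu hstat
    (by rw [hactive, sub_self, mul_zero]) (by rw [hbx₀, hslack]) hb hx

/-- If `(λ*, ν*)` with `λ* > 0`, `ν* ≥ 0` maximizes the dual function, then
`x* = -(1/λ*) H⁻¹ (g + ν* b)` is feasible and attains the primal optimal value. -/
theorem lqclp_primal_recovery
    (n : ℕ) (g b : Fin n → ℝ) (c δ : ℝ) (hδ : 0 < δ)
    (H : Matrix (Fin n) (Fin n) ℝ) (hH : H.PosDef)
    (hfeas : ∃ x : Fin n → ℝ, b ⬝ᵥ x + c < 0 ∧ x ⬝ᵥ (H *ᵥ x) < δ)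
    (lam nu : ℝ) (hlam : 0 < lam) (hnu : 0 ≤ nu)
    (hmax : ∀ l v : ℝ, 0 < l → 0 ≤ v →
      dualFn g b c δ H l v ≤ dualFn g b c δ H lam nu) :
    b ⬝ᵥ ((-(1 / lam)) • (H⁻¹ *ᵥ (g + nu • b))) + c ≤ 0
    ∧ ((-(1 / lam)) • (H⁻¹ *ᵥ (g + nu • b)))
        ⬝ᵥ (H *ᵥ ((-(1 / lam)) • (H⁻¹ *ᵥ (g + nu • b)))) ≤ δ
    ∧ g ⬝ᵥ ((-(1 / lam)) • (H⁻¹ *ᵥ (g + nu • b)))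
        = sInf {p : ℝ | ∃ x : Fin n → ℝ,
            b ⬝ᵥ x + c ≤ 0 ∧ x ⬝ᵥ (H *ᵥ x) ≤ δ ∧ p = g ⬝ᵥ x} :=
  lqclp_primal_recovery_general n g b c δ hδ H hH lam nu hlam hnu hmax
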